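/- arXiv:2208.07418 — 2 statements merged into one kernel-verified Lean document; each statement's English description precedes it below -/
import Mathlib

section
/- Let L = ℂ((t)) with its t-adic valuation v, and let τ = diag(t^{k_0},...,t^{k_n}) ∈ GL_{n+1}(L) with k_0 < k_1 ≤ ... ≤ k_{n-1} < k_n. Let η_1,...,η_r ∈ GL_{n+1}(ℂ), and suppose that for all i ≠ j in {1,...,r}, the vectors η_i(e_0) and η_i(e_n) do not lie in ker η_j(e_0^*) ∪ ker η_j(e_n^*) (where η_j acts on the dual basis vectors by the contragredient action). Then the elements g_i := η_i τ η_i^{-1}, i = 1,...,r, freely generate a free subgroup of GL_{n+1}(L) of rank r. -/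
/-!
Call a vector `y` over a valued field *dominant* at the coordinate `p` if `y p` has strictly
smaller valuation than every other coordinate. In the frame `ηᵢ` (i.e. on `ηᵢ⁻¹ y`) the element
`gᵢ` acts as `τ = diag(t^{kₗ})`, so since `k₀` is the strict minimum of the exponents it turns a
vector whose coordinate `0` has minimal valuation into one dominant at `0`; likewise `gᵢ⁻¹` and
the coordinate `n`. The non-incidence condition says that the entries of `ηᵢ⁻¹ηⱼ` at the
positions `{0, n} × {0, n}` are nonzero constants, so a vector dominant at `0` or `n` in the
frame `ηⱼ` has both its coordinates `0` and `n` of minimal valuation in every other frame `ηᵢ`.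
Following a reduced word letter by letter from a constant vector whose coordinates are nonzero
in all frames, one ends with a vector dominant in the frame of the first letter, which is not
the constant vector we started from.
-/

open Matrix

namespace Matrix.GeneralLinearGroup

variable {n R S : Type*} [Fintype n] [DecidableEq n] [CommRing R] [CommRing S]

instance : MulAction (GL n R) (n → R) where
  smul g v := (g : Matrix n n R) *ᵥ v
  one_smul v := by simp
  mul_smul g h v := (mulVec_mulVec v (g : Matrix n n R) h).symm

theorem smul_eq_mulVec (g : GL n R) (v : n → R) : g • v = (g : Matrix n n R) *ᵥ v := rfl

theorem map_smul_comp (f : R →+* S) (g : GL n R) (v : n → R) :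
    map f g • (f ∘ v) = f ∘ (g • v) := by
  ext l
  exact (RingHom.map_mulVec f (g : Matrix n n R) v l).symm

end Matrix.GeneralLinearGroup

namespace FreeGroup

variable {ι G α : Type*} [Group G] [MulAction G α]

theorem prod_smul_mem_of_isReduced (a : ι → G) {X Y : ι × Bool → Set α} {x₀ : α}
    (hmaps : ∀ c : ι × Bool, Set.MapsTo (cond c.2 (a c.1) (a c.1)⁻¹ • ·) (Y c) (X c))
    (hfollow : ∀ c d : ι × Bool, (c.1 = d.1 → c.2 = d.2) → X d ⊆ Y c)
    (hx₀ : ∀ c, x₀ ∈ Y c) {c : ι × Bool} {ℓ : List (ι × Bool)} (hred : IsReduced (c :: ℓ)) :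
    ((c :: ℓ).map fun d => cond d.2 (a d.1) (a d.1)⁻¹).prod • x₀ ∈ X c := by
  induction ℓ generalizing c with
  | nil => simpa using hmaps c (hx₀ c)
  | cons d ℓ ih =>
    rw [isReduced_cons_cons] at hred
    rw [List.map_cons, List.prod_cons, mul_smul]
    exact hmaps c (hfollow c d hred.1 (ih hred.2))

/-- Unlike in `FreeGroup.injective_lift_of_ping_pong`, the letter `c` only has to map `Y c` into
`X c`; `c.1 = d.1 → c.2 = d.2` says that `d` may follow `c` in a reduced word. -/
theorem injective_lift_of_dominance (a : ι → G) (X Y : ι × Bool → Set α) (x₀ : α)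
    (hmaps : ∀ c : ι × Bool, Set.MapsTo (cond c.2 (a c.1) (a c.1)⁻¹ • ·) (Y c) (X c))
    (hfollow : ∀ c d : ι × Bool, (c.1 = d.1 → c.2 = d.2) → X d ⊆ Y c)
    (hx₀ : ∀ c, x₀ ∈ Y c \ X c) : Function.Injective (lift a) := by
  classical
  refine (injective_iff_map_eq_one _).mpr fun w hw => ?_
  by_contra hne
  obtain ⟨c, ℓ, hw_word⟩ := List.exists_cons_of_ne_nil (mt toWord_eq_nil_iff.mp hne)
  have hmem := prod_smul_mem_of_isReduced a hmaps hfollow (fun c => (hx₀ c).1)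
    (hw_word ▸ isReduced_toWord)
  rw [← hw_word, ← lift_mk, mk_toWord, hw, one_smul] at hmem
  exact (hx₀ c).2 hmem

theorem injective_lift_conj_of_dominance (P : ι → G) (τ : G) (X Y : Bool → Set α) (x₀ : α)
    (hmaps : ∀ b, Set.MapsTo (cond b τ τ⁻¹ • ·) (Y b) (X b))
    (hself : ∀ b, X b ⊆ Y b)
    (hother : ∀ i j, i ≠ j → ∀ b b', Set.MapsTo (((P i)⁻¹ * P j) • ·) (X b') (Y b))
    (hx₀ : ∀ i b, (P i)⁻¹ • x₀ ∈ Y b \ X b) :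
    Function.Injective (lift fun i => P i * τ * (P i)⁻¹) := by
  refine injective_lift_of_dominance _ (fun c => {y | (P c.1)⁻¹ • y ∈ X c.2})
    (fun c => {y | (P c.1)⁻¹ • y ∈ Y c.2}) x₀ ?_ ?_ fun c => hx₀ c.1 c.2
  · rintro ⟨i, b⟩ y (hy : (P i)⁻¹ • y ∈ Y b)
    have hconj : (P i)⁻¹ * cond b (P i * τ * (P i)⁻¹) (P i * τ * (P i)⁻¹)⁻¹ =
        cond b τ τ⁻¹ * (P i)⁻¹ := by
      cases b <;> simp only [cond_true, cond_false] <;> group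
    show (P i)⁻¹ • _ • y ∈ X b
    rw [smul_smul, hconj, mul_smul]
    exact hmaps b hy
  · rintro ⟨i, b⟩ ⟨j, b'⟩ hfollow y (hy : (P j)⁻¹ • y ∈ X b')
    show (P i)⁻¹ • y ∈ Y b
    by_cases hij : i = j
    · subst hij
      obtain rfl : b = b' := hfollow rfl
      exact hself b hy
    · simpa only [mul_smul, smul_inv_smul] using hother i j hij b b' hy

end FreeGroup

section Dominance

variable {ι L : Type*} [Field L] (v : AddValuation L (WithTop ℤ))

def IsDominantAt (y : ι → L) (p : ι) : Prop :=
  ∀ l ≠ p, v (y p) < v (y l)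

def IsWeaklyDominantAt (y : ι → L) (p : ι) : Prop :=
  v (y p) ≠ ⊤ ∧ ∀ l, v (y p) ≤ v (y l)

variable {v} {y : ι → L} {p : ι}

theorem IsDominantAt.isWeaklyDominantAt [Nontrivial ι] (h : IsDominantAt v y p) :
    IsWeaklyDominantAt v y p := by
  obtain ⟨l, hl⟩ := exists_ne p
  refine ⟨(h l hl).ne_top, fun l' => ?_⟩
  rcases eq_or_ne l' p with rfl | hl'
  · exact le_rfl
  · exact (h l' hl').le

theorem isWeaklyDominantAt_of_forall_eq_zero (hy : ∀ l, v (y l) = 0) (p : ι) :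
    IsWeaklyDominantAt v y p :=
  ⟨by simp [hy], fun l => by simp [hy]⟩

theorem not_isDominantAt_of_forall_eq_zero [Nontrivial ι] (hy : ∀ l, v (y l) = 0) (p : ι) :
    ¬ IsDominantAt v y p := fun h => by
  obtain ⟨l, hl⟩ := exists_ne p
  simpa [hy] using h l hl

theorem IsWeaklyDominantAt.isDominantAt_diagonal_mulVec [Fintype ι] [DecidableEq ι] {d : ι → L}
    (hd : ∀ l ≠ p, v (d p) < v (d l)) (hy : IsWeaklyDominantAt v y p) :
    IsDominantAt v (diagonal d *ᵥ y) p := by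
  intro l hl
  simp only [mulVec_diagonal, AddValuation.map_mul]
  calc v (d p) + v (y p) < v (d l) + v (y p) := WithTop.add_lt_add_right hy.1 (hd l hl)
    _ ≤ v (d l) + v (y l) := add_le_add_right (hy.2 l) _

theorem IsDominantAt.isWeaklyDominantAt_mulVec [Fintype ι] [Nontrivial ι]
    {B : Matrix ι ι L} (hB : ∀ l l', 0 ≤ v (B l l')) {q : ι} (hBqp : v (B q p) = 0)
    (hy : IsDominantAt v y p) : IsWeaklyDominantAt v (B *ᵥ y) q := by
  classical
  have hsplit : ∀ l, (B *ᵥ y) l = B l p * y p + ∑ l' ∈ Finset.univ.erase p, B l l' * y l' :=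
    fun l => (Finset.add_sum_erase _ _ (Finset.mem_univ p)).symm
  have hrest : ∀ l, v (y p) < v (∑ l' ∈ Finset.univ.erase p, B l l' * y l') := fun l =>
    AddValuation.map_lt_sum v hy.isWeaklyDominantAt.1 fun l' hl' => by
      rw [AddValuation.map_mul]
      exact lt_add_of_nonneg_of_lt (hB l l') (hy l' (Finset.ne_of_mem_erase hl'))
  have hpivot : v (B q p * y p) = v (y p) := by rw [AddValuation.map_mul, hBqp, zero_add]
  have hq : v ((B *ᵥ y) q) = v (y p) := by
    rw [hsplit, AddValuation.map_add_eq_of_lt_left v (hpivot ▸ hrest q), hpivot]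
  refine ⟨hq ▸ hy.isWeaklyDominantAt.1, fun l => ?_⟩
  rw [hq, hsplit]
  refine AddValuation.map_le_add v ?_ (hrest l).le
  rw [AddValuation.map_mul]
  exact le_add_of_nonneg_left (hB l p)

end Dominance

namespace HahnSeries

variable {Γ R : Type*} [AddCancelCommMonoid Γ] [LinearOrder Γ] [IsOrderedCancelAddMonoid Γ]
  [Ring R] [IsDomain R]

theorem addVal_C {a : R} (ha : a ≠ 0) : addVal Γ R (C a) = 0 := by
  rw [addVal_apply, C_apply, orderTop_single ha, WithTop.coe_zero]

theorem addVal_C_nonneg (a : R) : 0 ≤ addVal Γ R (C a) := by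
  rcases eq_or_ne a 0 with rfl | ha
  · simp
  · rw [addVal_C ha]

end HahnSeries

theorem LaurentSeries.addVal_single_one_zpow {K : Type*} [Field K] (m : ℤ) :
    HahnSeries.addVal ℤ K (HahnSeries.single 1 1 ^ m) = m := by
  rw [← RatFunc.single_zpow, HahnSeries.addVal_apply, HahnSeries.orderTop_single one_ne_zero]

theorem exists_forall_smul_apply_ne_zero {ι κ K : Type*} [Fintype ι] [DecidableEq ι] [Finite κ]
    [Field K] [Infinite K] (M : κ → GL ι K) : ∃ x : ι → K, ∀ i l, (M i • x) l ≠ 0 := by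
  by_contra! hcover
  let coord : κ × ι → Module.Dual K (ι → K) := fun c =>
    (LinearMap.proj c.2).comp (mulVecLin (M c.1 : Matrix ι ι K))
  obtain ⟨⟨i, l⟩, htop⟩ := Subspace.exists_eq_top_of_iUnion_eq_univ
    (p := fun c => LinearMap.ker (coord c)) <| Set.eq_univ_of_forall fun x => by
      obtain ⟨i, l, h⟩ := hcover x
      exact Set.mem_iUnion.mpr ⟨(i, l), h⟩
  have hzero := LinearMap.congr_fun (LinearMap.ker_eq_top.mp htop) ((M i)⁻¹ • Pi.single l 1)
  simp [coord, ← GeneralLinearGroup.smul_eq_mulVec] at hzero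

section LaurentSeries

variable {ι K : Type*} [Fintype ι] [Field K]

theorem isDominantAt_smul_of_coe_eq_diagonal [DecidableEq ι] {τ : GL ι (LaurentSeries K)}
    {k : ι → ℤ}
    (hτ : (τ : Matrix ι ι (LaurentSeries K)) = diagonal fun l => HahnSeries.single 1 1 ^ k l)
    {p : ι} (hp : ∀ l ≠ p, k p < k l) {y : ι → LaurentSeries K}
    (hy : IsWeaklyDominantAt (HahnSeries.addVal ℤ K) y p) :
    IsDominantAt (HahnSeries.addVal ℤ K) (τ • y) p := by
  rw [GeneralLinearGroup.smul_eq_mulVec, hτ]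
  refine hy.isDominantAt_diagonal_mulVec fun l hl => ?_
  simpa only [LaurentSeries.addVal_single_one_zpow, WithTop.coe_lt_coe] using hp l hl

theorem isDominantAt_inv_smul_of_coe_eq_diagonal [DecidableEq ι] {τ : GL ι (LaurentSeries K)}
    {k : ι → ℤ}
    (hτ : (τ : Matrix ι ι (LaurentSeries K)) = diagonal fun l => HahnSeries.single 1 1 ^ k l)
    {q : ι} (hq : ∀ l ≠ q, k l < k q) {y : ι → LaurentSeries K}
    (hy : IsWeaklyDominantAt (HahnSeries.addVal ℤ K) y q) :
    IsDominantAt (HahnSeries.addVal ℤ K) (τ⁻¹ • y) q := by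
  have hτinv : ((τ⁻¹ : GL ι (LaurentSeries K)) : Matrix ι ι (LaurentSeries K)) =
      diagonal fun l => HahnSeries.single 1 1 ^ (-k l) := by
    rw [GeneralLinearGroup.coe_inv, hτ]
    refine inv_eq_left_inv ?_
    rw [diagonal_mul_diagonal, ← diagonal_one]
    congr 1
    funext l
    rw [← zpow_add₀ (HahnSeries.single_ne_zero one_ne_zero), neg_add_cancel, zpow_zero]
  rw [GeneralLinearGroup.smul_eq_mulVec, hτinv]
  refine hy.isDominantAt_diagonal_mulVec fun l hl => ?_
  simpa only [LaurentSeries.addVal_single_one_zpow, WithTop.coe_lt_coe, neg_lt_neg_iff]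
    using hq l hl

theorem IsDominantAt.isWeaklyDominantAt_map_C_mulVec [Nontrivial ι] {M : Matrix ι ι K}
    {p q : ι} (hM : M q p ≠ 0) {y : ι → LaurentSeries K}
    (hy : IsDominantAt (HahnSeries.addVal ℤ K) y p) :
    IsWeaklyDominantAt (HahnSeries.addVal ℤ K) (M.map HahnSeries.C *ᵥ y) q :=
  hy.isWeaklyDominantAt_mulVec (fun _ _ => HahnSeries.addVal_C_nonneg _) (HahnSeries.addVal_C hM)

end LaurentSeries

theorem pingpong_free_generation_general (n r : ℕ) (hn : 1 ≤ n)
    (k : Fin (n + 1) → ℤ)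
    (h0 : ∀ i : Fin (n + 1), i ≠ 0 → k 0 < k i)
    (hlast : ∀ i : Fin (n + 1), i ≠ Fin.last n → k i < k (Fin.last n))
    (η : Fin r → GL (Fin (n + 1)) ℂ)
    -- non-incidence: for `i ≠ j`, `ηᵢ(e₀), ηᵢ(eₙ)` lie outside
    -- `ker ηⱼ(e₀*) ∪ ker ηⱼ(eₙ*)`, where `ηⱼ(eₗ*) = eₗ* ∘ ηⱼ⁻¹`.
    (hinc : ∀ i j : Fin r, i ≠ j →
      ∀ v ∈ ({Matrix.mulVec (η i : Matrix (Fin (n+1)) (Fin (n+1)) ℂ)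
                (Pi.single (0 : Fin (n+1)) (1 : ℂ)),
              Matrix.mulVec (η i : Matrix (Fin (n+1)) (Fin (n+1)) ℂ)
                (Pi.single (Fin.last n) (1 : ℂ))} : Set (Fin (n+1) → ℂ)),
        (Matrix.mulVec ((η j)⁻¹ : Matrix (Fin (n+1)) (Fin (n+1)) ℂ) v) 0 ≠ 0 ∧
        (Matrix.mulVec ((η j)⁻¹ : Matrix (Fin (n+1)) (Fin (n+1)) ℂ) v) (Fin.last n) ≠ 0)
    (τ : GL (Fin (n + 1)) (LaurentSeries ℂ))
    (hτ : (τ : Matrix (Fin (n+1)) (Fin (n+1)) (LaurentSeries ℂ)) =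
      Matrix.diagonal (fun i =>
        (HahnSeries.single (1 : ℤ) (1 : ℂ) : LaurentSeries ℂ) ^ (k i))) :
    Function.Injective
      ((FreeGroup.lift (fun i : Fin r =>
          (Matrix.GeneralLinearGroup.map
            (HahnSeries.C : ℂ →+* LaurentSeries ℂ) (η i)) * τ *
          (Matrix.GeneralLinearGroup.map
            (HahnSeries.C : ℂ →+* LaurentSeries ℂ) (η i))⁻¹)) :
        FreeGroup (Fin r) →* GL (Fin (n + 1)) (LaurentSeries ℂ)) := by
  have : Nontrivial (Fin (n + 1)) := Fin.nontrivial_iff_two_le.mpr (by omega)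
  let loc : Bool → Fin (n + 1) := fun b => cond b 0 (Fin.last n)
  have hentry : ∀ i j, i ≠ j → ∀ b b',
      (((η i)⁻¹ * η j : GL (Fin (n + 1)) ℂ) : Matrix (Fin (n + 1)) (Fin (n + 1)) ℂ)
        (loc b) (loc b') ≠ 0 := by
    intro i j hij b b'
    have h := hinc j i hij.symm _ (show (η j : Matrix (Fin (n + 1)) (Fin (n + 1)) ℂ) *ᵥ
      Pi.single (loc b') 1 ∈ _ by cases b' <;> simp [loc])
    rw [mulVec_mulVec, mulVec_single_one, ← GeneralLinearGroup.coe_inv,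
      ← GeneralLinearGroup.coe_mul] at h
    cases b
    exacts [h.2, h.1]
  obtain ⟨x, hx⟩ := exists_forall_smul_apply_ne_zero fun i => (η i)⁻¹
  have hseed : ∀ i l, HahnSeries.addVal ℤ ℂ ((HahnSeries.C ∘ ((η i)⁻¹ • x)) l) = 0 :=
    fun i l => HahnSeries.addVal_C (hx i l)
  refine FreeGroup.injective_lift_conj_of_dominance _ τ
    (fun b => {y | IsDominantAt (HahnSeries.addVal ℤ ℂ) y (loc b)})
    (fun b => {y | IsWeaklyDominantAt (HahnSeries.addVal ℤ ℂ) y (loc b)}) (HahnSeries.C ∘ x)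
    ?_ (fun b y hy => IsDominantAt.isWeaklyDominantAt hy) ?_ ?_
  · rintro (_ | _) y hy
    · exact isDominantAt_inv_smul_of_coe_eq_diagonal hτ hlast hy
    · exact isDominantAt_smul_of_coe_eq_diagonal hτ h0 hy
  · intro i j hij b b' y hy
    rw [← map_inv, ← map_mul]
    exact IsDominantAt.isWeaklyDominantAt_map_C_mulVec (hentry i j hij b b') hy
  · intro i b
    rw [← map_inv, GeneralLinearGroup.map_smul_comp]
    exact ⟨isWeaklyDominantAt_of_forall_eq_zero (hseed i) _,
      not_isDominantAt_of_forall_eq_zero (hseed i) _⟩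

/-- Ping-pong proposition: for `τ = diag(t^{k₀},…,t^{kₙ})` over `L = ℂ((t))` with
`k₀ < k₁ ≤ … ≤ k_{n-1} < kₙ`, and `η₁,…,η_r ∈ GL_{n+1}(ℂ)` satisfying the
non-incidence condition, the elements `gᵢ = ηᵢ τ ηᵢ⁻¹` freely generate a free
subgroup of `GL_{n+1}(L)` of rank `r`. -/
theorem pingpong_free_generation (n r : ℕ) (hn : 1 ≤ n)
    (k : Fin (n + 1) → ℤ) (hmono : Monotone k)
    (h0 : ∀ i : Fin (n + 1), i ≠ 0 → k 0 < k i)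
    (hlast : ∀ i : Fin (n + 1), i ≠ Fin.last n → k i < k (Fin.last n))
    (η : Fin r → GL (Fin (n + 1)) ℂ)
    -- non-incidence: for `i ≠ j`, `ηᵢ(e₀), ηᵢ(eₙ)` lie outside
    -- `ker ηⱼ(e₀*) ∪ ker ηⱼ(eₙ*)`, where `ηⱼ(eₗ*) = eₗ* ∘ ηⱼ⁻¹`.
    (hinc : ∀ i j : Fin r, i ≠ j →
      ∀ v ∈ ({Matrix.mulVec (η i : Matrix (Fin (n+1)) (Fin (n+1)) ℂ)
                (Pi.single (0 : Fin (n+1)) (1 : ℂ)),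
              Matrix.mulVec (η i : Matrix (Fin (n+1)) (Fin (n+1)) ℂ)
                (Pi.single (Fin.last n) (1 : ℂ))} : Set (Fin (n+1) → ℂ)),
        (Matrix.mulVec ((η j)⁻¹ : Matrix (Fin (n+1)) (Fin (n+1)) ℂ) v) 0 ≠ 0 ∧
        (Matrix.mulVec ((η j)⁻¹ : Matrix (Fin (n+1)) (Fin (n+1)) ℂ) v) (Fin.last n) ≠ 0)
    (τ : GL (Fin (n + 1)) (LaurentSeries ℂ))
    (hτ : (τ : Matrix (Fin (n+1)) (Fin (n+1)) (LaurentSeries ℂ)) =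
      Matrix.diagonal (fun i =>
        (HahnSeries.single (1 : ℤ) (1 : ℂ) : LaurentSeries ℂ) ^ (k i))) :
    Function.Injective
      ((FreeGroup.lift (fun i : Fin r =>
          (Matrix.GeneralLinearGroup.map
            (HahnSeries.C : ℂ →+* LaurentSeries ℂ) (η i)) * τ *
          (Matrix.GeneralLinearGroup.map
            (HahnSeries.C : ℂ →+* LaurentSeries ℂ) (η i))⁻¹)) :
        FreeGroup (Fin r) →* GL (Fin (n + 1)) (LaurentSeries ℂ)) :=
  pingpong_free_generation_general n r hn k h0 hlast η hinc τ hτ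
end

section
/- A diagonalizable complex special orthogonal matrix O ∈ SO_{2k+1}(ℂ) with O ≠ I cannot be written as cI + M where c ∈ ℂ is a scalar and M is a skew-symmetric complex matrix. -/
open Matrix

/-- A diagonalizable complex special orthogonal matrix of odd size other than the identity
is never the sum of a scalar matrix and a skew-symmetric matrix. -/
theorem so_odd_not_scalar_plus_skew (k : ℕ)
    (O : Matrix (Fin (2 * k + 1)) (Fin (2 * k + 1)) ℂ)
    (horth : Oᵀ * O = 1) (hdet : O.det = 1)
    (hdiag : ∃ P : Matrix (Fin (2 * k + 1)) (Fin (2 * k + 1)) ℂ,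
      IsUnit P.det ∧ (P * O * P⁻¹).IsDiag)
    (hO : O ≠ 1) :
    ¬ ∃ (c : ℂ) (M : Matrix (Fin (2 * k + 1)) (Fin (2 * k + 1)) ℂ),
        Mᵀ = -M ∧ O = c • (1 : Matrix (Fin (2 * k + 1)) (Fin (2 * k + 1)) ℂ) + M := by
  rintro ⟨c, M, hM, hOcM⟩
  -- transpose of O
  have hOT : Oᵀ = c • 1 - M := by
    rw [hOcM, transpose_add, transpose_smul, transpose_one, hM, sub_eq_add_neg]
  have hOOT : O * Oᵀ = 1 := mul_eq_one_comm.mp horth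
  -- quadratic relation O² + 1 = 2c O
  have h1 : O + Oᵀ = (2 * c) • (1 : Matrix (Fin (2 * k + 1)) (Fin (2 * k + 1)) ℂ) := by
    rw [hOT, hOcM]; module
  have hquad : O * O + 1 = (2 * c) • O := by
    have h2 := congrArg (· * O) h1
    simpa [add_mul, horth, smul_mul_assoc] using h2
  -- det (O - 1) = 0
  have hdetO1 : (O - 1).det = 0 := by
    have h2 : (O - 1) * Oᵀ = (1 - O)ᵀ := by
      rw [sub_mul, hOOT, one_mul, transpose_sub, transpose_one]
    have h3 : (O - 1).det * Oᵀ.det = (1 - O).det := by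
      rw [← det_mul, h2, det_transpose]
    have h4 : Oᵀ.det = 1 := by rw [det_transpose, hdet]
    have h5 : (1 - O : Matrix _ _ ℂ) = -(O - 1) := by rw [neg_sub]
    rw [h4, mul_one, h5, det_neg] at h3
    have hodd : (-1 : ℂ) ^ Fintype.card (Fin (2 * k + 1)) = -1 := by
      rw [Fintype.card_fin]
      exact Odd.neg_one_pow ⟨k, by ring⟩
    rw [hodd] at h3
    have h6 : (2 : ℂ) * (O - 1).det = 0 := by linear_combination h3
    exact (mul_eq_zero.mp h6).resolve_left two_ne_zero
  obtain ⟨P, hP, hD⟩ := hdiag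
  set D := P * O * P⁻¹ with hDdef
  have hPinv : P⁻¹ * P = 1 := nonsing_inv_mul P hP
  have hPinv' : P * P⁻¹ = 1 := mul_nonsing_inv P hP
  -- D satisfies the same quadratic
  have hDD : D * D = P * (O * O) * P⁻¹ := by
    calc P * O * P⁻¹ * (P * O * P⁻¹) = P * O * (P⁻¹ * P) * O * P⁻¹ := by
          simp only [Matrix.mul_assoc]
      _ = P * (O * O) * P⁻¹ := by rw [hPinv]; simp only [Matrix.mul_assoc, Matrix.one_mul]
  have hDq : D * D + 1 = (2 * c) • D := by
    rw [hDD]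
    have : P * (O * O + 1) * P⁻¹ = P * ((2 * c) • O) * P⁻¹ := by rw [hquad]
    rw [Matrix.mul_add, Matrix.add_mul, Matrix.mul_one, hPinv'] at this
    rw [this, Matrix.mul_smul, Matrix.smul_mul]
  -- diagonal entries satisfy the quadratic
  have hentry : ∀ i, D i i * D i i + 1 = 2 * c * D i i := by
    intro i
    have h2 := congrFun (congrFun hDq i) i
    have hsum : (D * D) i i = D i i * D i i := by
      rw [Matrix.mul_apply]
      exact Finset.sum_eq_single i
        (fun j _ hj => by rw [hD (Ne.symm hj), zero_mul])
        (fun h => absurd (Finset.mem_univ i) h)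
    simpa [Matrix.add_apply, Matrix.one_apply, Matrix.smul_apply, hsum,
      smul_eq_mul] using h2
  -- det (D - 1) = 0
  have hdetD : (D - 1).det = 0 := by
    have h2 : D - 1 = P * (O - 1) * P⁻¹ := by
      rw [Matrix.mul_sub, Matrix.sub_mul, Matrix.mul_one, hPinv']
    rw [h2, det_mul, det_mul, hdetO1, mul_zero, zero_mul]
  -- some diagonal entry of D equals 1
  have hD1 : (D - 1).IsDiag := by
    intro i j hij
    simp [Matrix.sub_apply, hD hij, Matrix.one_apply_ne hij]
  have hBT : (D - 1).BlockTriangular id := fun i j hij => hD1 (ne_of_gt hij)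
  have hprod : ∏ i, (D - 1) i i = 0 := by
    rw [← det_of_upperTriangular hBT]; exact hdetD
  obtain ⟨i0, _, hi0⟩ := Finset.prod_eq_zero_iff.mp hprod
  have hDi0 : D i0 i0 = 1 := by
    have h2 : D i0 i0 - 1 = 0 := by simpa [Matrix.sub_apply] using hi0
    exact sub_eq_zero.mp h2
  -- c = 1
  have hc : c = 1 := by
    have := hentry i0
    rw [hDi0] at this
    linear_combination (-1/2 : ℂ) * this
  -- all diagonal entries equal 1
  have hall : ∀ j, D j j = 1 := by
    intro j
    have h2 := hentry j
    rw [hc] at h2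
    have h3 : (D j j - 1) ^ 2 = 0 := by linear_combination h2
    have h4 := pow_eq_zero_iff (n := 2) (by norm_num) |>.mp h3
    exact sub_eq_zero.mp h4
  -- D = 1
  have hDone : D = 1 := by
    ext i j
    by_cases hij : i = j
    · subst hij; rw [hall i, Matrix.one_apply_eq]
    · rw [hD hij, Matrix.one_apply_ne hij]
  -- hence O = 1
  apply hO
  have h1' : P * O * P⁻¹ = 1 := by rw [← hDdef]; exact hDone
  have h2 : P * O = P := by
    have h3 := congrArg (· * P) h1'
    simpa [Matrix.mul_assoc, hPinv] using h3
  calc O = P⁻¹ * (P * O) := by rw [← Matrix.mul_assoc, hPinv, Matrix.one_mul]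
    _ = P⁻¹ * P := by rw [h2]
    _ = 1 := hPinv
end
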